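/- arXiv:2602.09928 — 2 statements merged into one kernel-verified Lean document; each statement's English description precedes it below -/
import Mathlib

section
/- Let v ∈ ℝ^N with v ≠ 0, σ ∈ (0,1), F, e ∈ ℝ^N with F̃ := F − t̃e ⊥ ẽ := (1+t̃)e where t̃ = ⟨F,e⟩/‖e‖² ∈ (−1,1). Suppose ⟨F̃, v⟩ < 0 and ⟨F + e, v⟩ ≥ σ‖F + e‖‖v‖. Then ⟨ẽ, v⟩ > σ‖ẽ‖‖v‖, and consequently for any t* ∈ (0,1] with ⟨t* e, v⟩ = −⟨F, v⟩, it holds that σ‖t* e‖‖v‖ ≤ ‖F‖‖v‖, i.e., t*‖e‖ ≤ (1/σ)‖F‖. -/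
open RealInnerProductSpace

theorem stmt13 {N : ℕ} (v F e : EuclideanSpace ℝ (Fin N)) (hv : v ≠ 0)
    (σ : ℝ) (hσ : σ ∈ Set.Ioo (0:ℝ) 1)
    (t : ℝ) (ht : t = ⟪F, e⟫ / ‖e‖ ^ 2) (htI : t ∈ Set.Ioo (-1:ℝ) 1)
    (hFt : ⟪F - t • e, v⟫ < 0)
    (hang : ⟪F + e, v⟫ ≥ σ * ‖F + e‖ * ‖v‖) :
    ⟪(1 + t) • e, v⟫ > σ * ‖(1 + t) • e‖ * ‖v‖ ∧
    ∀ ts : ℝ, ts ∈ Set.Ioc (0:ℝ) 1 → ⟪ts • e, v⟫ = -⟪F, v⟫ →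
      ts * ‖e‖ ≤ (1 / σ) * ‖F‖ := by
  obtain ⟨hσ0, hσ1⟩ := hσ
  obtain ⟨ht1, ht2⟩ := htI
  have hv0 : (0:ℝ) < ‖v‖ := norm_pos_iff.mpr hv
  -- e ≠ 0
  have he : e ≠ 0 := by
    intro h
    subst h
    simp only [smul_zero, sub_zero] at hFt
    simp only [add_zero] at hang
    have : (0:ℝ) ≤ σ * ‖F‖ * ‖v‖ := by positivity
    linarith
  have he0 : (0:ℝ) < ‖e‖ := norm_pos_iff.mpr he
  -- orthogonality
  have horth : ⟪F - t • e, (1 + t) • e⟫ = 0 := by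
    rw [inner_smul_right, inner_sub_left, inner_smul_left]
    have : ⟪e, e⟫ = ‖e‖ ^ 2 := real_inner_self_eq_norm_sq e
    rw [this]
    have : t * ‖e‖ ^ 2 = ⟪F, e⟫ := by
      rw [ht]; field_simp
    simp only [RCLike.star_def, conj_trivial]
    rw [this]; ring
  -- ‖F + e‖ ≥ ‖(1+t) • e‖
  have hnorm : ‖(1 + t) • e‖ ≤ ‖F + e‖ := by
    have hdecomp : F + e = (F - t • e) + (1 + t) • e := by
      simp [add_smul, sub_add_eq_add_sub]; abel
    have hsq : ‖F + e‖ ^ 2 = ‖F - t • e‖ ^ 2 + ‖(1 + t) • e‖ ^ 2 := by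
      rw [hdecomp, norm_add_sq_real, horth]; ring
    nlinarith [norm_nonneg (F - t • e), norm_nonneg ((1 + t) • e), norm_nonneg (F + e)]
  have hsum : ⟪F + e, v⟫ = ⟪F - t • e, v⟫ + ⟪(1 + t) • e, v⟫ := by
    rw [← inner_add_left]
    congr 1
    simp [add_smul, sub_add_eq_add_sub]; abel
  have hpart1 : ⟪(1 + t) • e, v⟫ > σ * ‖(1 + t) • e‖ * ‖v‖ := by
    have h1 : σ * ‖(1 + t) • e‖ * ‖v‖ ≤ σ * ‖F + e‖ * ‖v‖ := by
      have := mul_le_mul_of_nonneg_left hnorm hσ0.le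
      nlinarith
    nlinarith
  refine ⟨hpart1, ?_⟩
  intro ts ⟨hts0, hts1⟩ hts
  -- ⟪e, v⟫ > σ ‖e‖ ‖v‖
  have h1t : (0:ℝ) < 1 + t := by linarith
  have hev : σ * ‖e‖ * ‖v‖ < ⟪e, v⟫ := by
    have hn : ‖(1 + t) • e‖ = (1 + t) * ‖e‖ := by
      rw [norm_smul, Real.norm_eq_abs, abs_of_pos h1t]
    rw [inner_smul_left] at hpart1
    simp only [RCLike.star_def, conj_trivial] at hpart1
    rw [hn] at hpart1
    nlinarith
  have hCS : -⟪F, v⟫ ≤ ‖F‖ * ‖v‖ := by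
    have := real_inner_le_norm F v
    have h2 := real_inner_le_norm (-F) v
    rw [inner_neg_left, norm_neg] at h2
    linarith
  rw [inner_smul_left] at hts
  simp only [RCLike.star_def, conj_trivial] at hts
  have key : σ * (ts * ‖e‖) * ‖v‖ ≤ ‖F‖ * ‖v‖ := by
    nlinarith
  rw [div_mul_eq_mul_div, le_div_iff₀ hσ0, one_mul] at *
  nlinarith
end

section
/- Let Φ∘w : ℝᵐ → ℝ and h∘w : ℝᵐ → ℝ be continuous, u* ∈ ℝᵐ a global minimizer of Φ∘w over K := {u : b(u) ≥ 0, h(w(u)) ≥ 0} with h(w(u*)) = 0. Fix u_c ∈ K with ε := h(w(u_c)) > 0, and choose p > 0 with Φ(w(u_c)) < Φ(w(u*)) + pε². If u'* minimizes u ↦ Φ(w(u)) + p(ε − h(w(u)))² over K, then h(w(u'*)) > 0 and Φ(w(u*)) ≤ Φ(w(u'*)) ≤ Φ(w(u_c)). -/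
theorem stmt16 {n m : ℕ}
    (Φ h : EuclideanSpace ℝ (Fin n) → ℝ) (b : EuclideanSpace ℝ (Fin m) → ℝ)
    (w : EuclideanSpace ℝ (Fin m) → EuclideanSpace ℝ (Fin n))
    (hΦw : Continuous fun u => Φ (w u)) (hhw : Continuous fun u => h (w u))
    (K : Set (EuclideanSpace ℝ (Fin m)))
    (hK : K = {u | 0 ≤ b u ∧ 0 ≤ h (w u)})
    (ustar : EuclideanSpace ℝ (Fin m)) (hustar : ustar ∈ K)
    (hmin : ∀ u ∈ K, Φ (w ustar) ≤ Φ (w u))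
    (hhstar : h (w ustar) = 0)
    (uc : EuclideanSpace ℝ (Fin m)) (huc : uc ∈ K)
    (ε : ℝ) (hε : ε = h (w uc)) (hεpos : 0 < ε)
    (p : ℝ) (hp : 0 < p) (hgap : Φ (w uc) < Φ (w ustar) + p * ε ^ 2)
    (u' : EuclideanSpace ℝ (Fin m)) (hu' : u' ∈ K)
    (hmin' : ∀ u ∈ K,
      Φ (w u') + p * (ε - h (w u')) ^ 2 ≤ Φ (w u) + p * (ε - h (w u)) ^ 2) :
    0 < h (w u') ∧ Φ (w ustar) ≤ Φ (w u') ∧ Φ (w u') ≤ Φ (w uc) := by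
  have huc' := hmin' uc huc
  rw [← hε] at huc'
  simp only [sub_self] at huc'
  have hle : Φ (w u') + p * (ε - h (w u')) ^ 2 ≤ Φ (w uc) := by
    simpa using huc'
  have hnn : 0 ≤ h (w u') := by rw [hK] at hu'; exact hu'.2
  have hpos : 0 < h (w u') := by
    rcases lt_or_eq_of_le hnn with h1 | h1
    · exact h1
    · exfalso
      rw [← h1, sub_zero] at hle
      have := hmin u' hu'
      nlinarith
  refine ⟨hpos, hmin u' hu', ?_⟩
  nlinarith [sq_nonneg (ε - h (w u')), hp]
end
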